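/- arXiv:2304.02355 — 4 statements merged into one kernel-verified Lean document; each statement's English description precedes it below -/
import Mathlib

section
/- Let u : ℕ → ℝ satisfy u_k ≥ 0 for all k, and suppose there are constants c, d, p > 0 with c > p such that u_{k+1} ≤ (1 − c/k)·u_k + d/k^{1+p} for all k ≥ 1. Then limsup_{k→∞} k^p · u_k ≤ d/(c − p); in particular u_k ≤ d(c−p)^{-1} k^{-p} + o(k^{-p}) as k → ∞. -/
open Filter Real Finset Topology

private lemma exp_le_est {s : ℝ} (h0 : 0 ≤ s) (h1 : s ≤ 1/2) :
    Real.exp s ≤ 1 + s + 2*s^2 := by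
  have h2 : 1 - s ≤ Real.exp (-s) := by have := Real.add_one_le_exp (-s); linarith
  have h3 : (0:ℝ) < 1 - s := by linarith
  have h4 : Real.exp s = 1 / Real.exp (-s) := by
    rw [Real.exp_neg, one_div, inv_inv]
  rw [h4]
  have h5 : 1 / Real.exp (-s) ≤ 1 / (1 - s) :=
    one_div_le_one_div_of_le h3 h2
  refine h5.trans ?_
  rw [div_le_iff₀ h3]
  nlinarith
private lemma rpow_le_est {p x : ℝ} (hp : 0 ≤ p) (hx : 0 ≤ x) (h : p*x ≤ 1/2) :
    (1+x)^p ≤ 1 + p*x + 2*(p*x)^2 := by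
  have h1 : (0:ℝ) < 1 + x := by linarith
  rw [Real.rpow_def_of_pos h1]
  have hlog : Real.log (1+x) ≤ x := by
    have := Real.log_le_sub_one_of_pos h1; linarith
  have hmul : Real.log (1+x) * p ≤ p * x := by
    rw [mul_comm]; exact mul_le_mul_of_nonneg_left hlog hp
  calc Real.exp (Real.log (1+x) * p) ≤ Real.exp (p*x) := Real.exp_le_exp.2 hmul
    _ ≤ 1 + p*x + 2*(p*x)^2 := exp_le_est (mul_nonneg hp hx) h

set_option maxHeartbeats 1000000 in
/-- **Chung's lemma, case `c > p`.** If `u k ≥ 0` and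
`u (k+1) ≤ (1 - c/k) * u k + d / k^(1+p)` for all `k ≥ 1`, with `0 < p < c` and `d > 0`,
then `limsup_k k^p * u k ≤ d / (c - p)`; in particular
`u k ≤ d (c-p)⁻¹ k^(-p) + o(k^(-p))`. -/
theorem chung_lemma_case_gt
    (u : ℕ → ℝ) (hu : ∀ k, 0 ≤ u k)
    (c d p : ℝ) (hc : 0 < c) (hd : 0 < d) (hp : 0 < p) (hcp : p < c)
    (hrec : ∀ k : ℕ, 1 ≤ k →
      u (k + 1) ≤ (1 - c / k) * u k + d / (k : ℝ) ^ (1 + p)) :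
    Filter.limsup (fun k : ℕ => (k : ℝ) ^ p * u k) Filter.atTop ≤ d / (c - p) := by
  set q : ℝ := c - p with hqdef
  have hq0 : 0 < q := by simp only [hqdef]; linarith
  set w : ℕ → ℝ := fun k => (k:ℝ)^p * u k with hwdef
  have hw0 : ∀ k, 0 ≤ w k := fun k => mul_nonneg (Real.rpow_nonneg (Nat.cast_nonneg k) p) (hu k)
  have key : ∀ ε : ℝ, 0 < ε → ∀ᶠ k : ℕ in atTop, w k ≤ d/q + ε := by
    intro ε hε
    -- choose δ
    obtain ⟨δ, hδL, hδq, hδ0⟩ : ∃ δ : ℝ, d*(1+δ)/(q-δ) ≤ d/q + ε/2 ∧ δ < q ∧ 0 < δ := by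
      have hcont : ContinuousAt (fun δ : ℝ => d*(1+δ)/(q-δ)) 0 := by
        apply ContinuousAt.div (by fun_prop) (by fun_prop)
        simpa using hq0.ne'
      have hlim : Tendsto (fun δ : ℝ => d*(1+δ)/(q-δ)) (𝓝[>] 0) (𝓝 (d/q)) := by
        have h := hcont.tendsto
        simp only [add_zero, mul_one, sub_zero] at h
        exact h.mono_left nhdsWithin_le_nhds
      have h1 : ∀ᶠ δ in 𝓝[>] (0:ℝ), d*(1+δ)/(q-δ) ≤ d/q + ε/2 :=
        hlim.eventually_le_const (by linarith)
      have h2 : ∀ᶠ δ in 𝓝[>] (0:ℝ), δ < q :=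
        eventually_nhdsWithin_of_eventually_nhds (gt_mem_nhds hq0)
      have h3 : ∀ᶠ δ in 𝓝[>] (0:ℝ), 0 < δ :=
        eventually_mem_nhdsWithin
      exact ((h1.and h2).and h3).exists.imp (fun δ h => ⟨h.1.1, h.1.2, h.2⟩)
    set q' : ℝ := q - δ with hq'def
    have hq'0 : 0 < q' := by simp only [hq'def]; linarith
    set L : ℝ := d*(1+δ)/q' with hLdef
    have hL0 : 0 ≤ L := by positivity
    have hq'L : q' * L = d*(1+δ) := by
      rw [hLdef, mul_comm, div_mul_cancel₀ _ hq'0.ne']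
    set C : ℝ := max (max (2*c) (2*p+1)) (max (2*p^2/δ) ((p+δ)/δ)) with hCdef
    obtain ⟨N₀, hN₀⟩ := eventually_atTop.1
      ((tendsto_natCast_atTop_atTop (R := ℝ)).eventually_ge_atTop C)
    set N : ℕ := max N₀ 1 with hNdef
    have hN1 : 1 ≤ N := le_max_right _ _
    have hNC : ∀ k : ℕ, N ≤ k → C ≤ (k:ℝ) := fun k hk =>
      hN₀ k (le_trans (le_max_left _ _) hk)
    have hstep : ∀ k : ℕ, N ≤ k →
        w (k+1) ≤ (1 - q'/k) * w k + q'*L/k ∧ (0:ℝ) < k ∧ q' ≤ (k:ℝ) := by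
      intro k hk
      have hk1 : 1 ≤ k := le_trans hN1 hk
      have hkC : C ≤ (k:ℝ) := hNC k hk
      have hkpos : (0:ℝ) < k := by exact_mod_cast hk1
      have h2c : 2*c ≤ (k:ℝ) := le_trans (le_trans (le_max_left _ _) (le_max_left _ _)) hkC
      have h2p : 2*p+1 ≤ (k:ℝ) := le_trans (le_trans (le_max_right _ _) (le_max_left _ _)) hkC
      have h2p2 : 2*p^2 ≤ δ*(k:ℝ) := by
        have h := le_trans (le_trans (le_max_left _ _) (le_max_right _ _)) hkC
        rw [div_le_iff₀ hδ0] at h; linarith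
      have hpd : p+δ ≤ δ*(k:ℝ) := by
        have h := le_trans (le_trans (le_max_right _ _) (le_max_right _ _)) hkC
        rw [div_le_iff₀ hδ0] at h; linarith
      have hx0 : (0:ℝ) ≤ 1/(k:ℝ) := by positivity
      have hpx : p*(1/(k:ℝ)) ≤ 1/2 := by
        rw [mul_one_div, div_le_iff₀ hkpos]; linarith
      have hest := rpow_le_est hp.le hx0 hpx
      set A : ℝ := (1+1/(k:ℝ))^p with hAdef
      have hA0 : 0 ≤ A := Real.rpow_nonneg (by positivity) _
      have ht : (1/(k:ℝ))*(k:ℝ) = 1 := one_div_mul_cancel hkpos.ne'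
      have hA1 : A ≤ 1 + (p+δ)/(k:ℝ) := by
        have e1 : 2*(p*(1/(k:ℝ)))^2 ≤ δ*(1/(k:ℝ)) := by
          have h := mul_le_mul_of_nonneg_right h2p2 (mul_nonneg hx0 hx0)
          calc 2*(p*(1/(k:ℝ)))^2 = 2*p^2*((1/(k:ℝ))*(1/(k:ℝ))) := by ring
            _ ≤ δ*(k:ℝ)*((1/(k:ℝ))*(1/(k:ℝ))) := h
            _ = δ*(1/(k:ℝ))*((1/(k:ℝ))*(k:ℝ)) := by ring
            _ = δ*(1/(k:ℝ)) := by rw [ht, mul_one]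
        have e2 : (p+δ)/(k:ℝ) = p*(1/(k:ℝ)) + δ*(1/(k:ℝ)) := by ring
        linarith
      have hAδ : A ≤ 1 + δ := by
        have h : (p+δ)/(k:ℝ) ≤ δ := by
          rw [div_le_iff₀ hkpos]; linarith
        linarith
      set P : ℝ := (k:ℝ)^p with hPdef
      have hP0 : 0 < P := Real.rpow_pos_of_pos hkpos _
      have hsplit : ((k:ℝ)+1)^p = P * A := by
        rw [hPdef, hAdef, ← Real.mul_rpow hkpos.le (by positivity)]
        congr 1
        field_simp
      have hk1p : (k:ℝ)^(1+p) = (k:ℝ) * P := by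
        rw [hPdef, Real.rpow_add hkpos, Real.rpow_one]
      have h0 := hrec k hk1
      have hwk1 : w (k+1) = ((k:ℝ)+1)^p * u (k+1) := by
        simp only [hwdef]; push_cast; ring_nf
      have hwk : w k = P * u k := rfl
      have hck : c/(k:ℝ) ≤ 1/2 := by rw [div_le_iff₀ hkpos]; linarith
      have hc0 : (0:ℝ) ≤ 1 - c/(k:ℝ) := by linarith
      have hq'eq : q' = c - p - δ := by rw [hq'def, hqdef]
      refine ⟨?_, hkpos, by linarith⟩
      rw [hwk1, hsplit]
      calc P*A*u (k+1) ≤ P*A*((1 - c/(k:ℝ)) * u k + d/(k:ℝ)^(1+p)) := by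
            apply mul_le_mul_of_nonneg_left h0 (by positivity)
        _ = (A*(1-c/(k:ℝ)))*(P*u k) + d*A*(1/(k:ℝ)) := by
            rw [hk1p]; field_simp
        _ ≤ (1 - q'/(k:ℝ))*(P*u k) + q'*L*(1/(k:ℝ)) := by
            have hwknn : 0 ≤ P * u k := mul_nonneg hP0.le (hu k)
            have hco : A*(1-c/(k:ℝ)) ≤ 1 - q'/(k:ℝ) := by
              have g1 : A*(1-c/(k:ℝ)) ≤ (1+(p+δ)/(k:ℝ))*(1-c/(k:ℝ)) :=
                mul_le_mul_of_nonneg_right hA1 hc0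
              have g2 : (1+(p+δ)/(k:ℝ))*(1-c/(k:ℝ)) ≤ 1 - q'/(k:ℝ) := by
                have e3 : (1+(p+δ)/(k:ℝ))*(1-c/(k:ℝ))
                    = 1 - (c-p-δ)/(k:ℝ) - c*(p+δ)*((1/(k:ℝ))*(1/(k:ℝ)))*((1/(k:ℝ))*(k:ℝ)) := by
                  field_simp; ring
                have e4 : 0 ≤ c*(p+δ)*((1/(k:ℝ))*(1/(k:ℝ)))*((1/(k:ℝ))*(k:ℝ)) := by positivity
                rw [e3, hq'eq]; linarith
              linarith
            have t1 : (A*(1-c/(k:ℝ)))*(P*u k) ≤ (1 - q'/(k:ℝ))*(P*u k) :=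
              mul_le_mul_of_nonneg_right hco hwknn
            have t2 : d*A ≤ q'*L := by rw [hq'L]; exact mul_le_mul_of_nonneg_left hAδ hd.le
            have t3 : d*A*(1/(k:ℝ)) ≤ q'*L*(1/(k:ℝ)) :=
              mul_le_mul_of_nonneg_right t2 hx0
            linarith
        _ = (1 - q'/(k:ℝ)) * (P*u k) + q'*L/(k:ℝ) := by ring
    have habs : ∀ k : ℕ, N ≤ k → w k ≤ L + ε/2 → w (k+1) ≤ L + ε/2 := by
      intro k hk hwk
      obtain ⟨hs, hkpos, hq'k⟩ := hstep k hk
      have h1 : 0 ≤ 1 - q'/(k:ℝ) := by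
        rw [sub_nonneg, div_le_one hkpos]; exact hq'k
      have h2 : (1 - q'/(k:ℝ)) * w k ≤ (1 - q'/(k:ℝ)) * (L + ε/2) :=
        mul_le_mul_of_nonneg_left hwk h1
      have h3 : (1 - q'/(k:ℝ)) * (L+ε/2) + q'*L/(k:ℝ) = L + ε/2 - (q'*(ε/2))/(k:ℝ) := by
        ring
      have h4 : 0 ≤ (q'*(ε/2))/(k:ℝ) := by positivity
      linarith
    have hescape : ∃ k0 : ℕ, N ≤ k0 ∧ w k0 ≤ L + ε/2 := by
      by_contra hcon
      push_neg at hcon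
      set E : ℝ := q'*(ε/2) with hEdef
      have hE : 0 < E := by positivity
      have hdec : ∀ m : ℕ, w (N+m) + E * (∑ i ∈ Finset.range m, 1/((N:ℝ)+i)) ≤ w N := by
        intro m
        induction m with
        | zero => simp
        | succ m ih =>
          obtain ⟨hs, hkpos, _⟩ := hstep (N+m) (Nat.le_add_right N m)
          have hwk := hcon (N+m) (Nat.le_add_right N m)
          have hcast : ((N+m : ℕ):ℝ) = (N:ℝ)+m := by push_cast; ring
          rw [hcast] at hs hkpos
          have hq'K : 0 < q'/((N:ℝ)+m) := div_pos hq'0 hkpos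
          have hmul : (q'/((N:ℝ)+m))*(L+ε/2) ≤ (q'/((N:ℝ)+m))*(w (N+m)) :=
            mul_le_mul_of_nonneg_left hwk.le hq'K.le
          have hstep2 : w (N+m+1) ≤ w (N+m) - E/((N:ℝ)+m) := by
            have expand : (1 - q'/((N:ℝ)+m)) * w (N+m) + q'*L/((N:ℝ)+m)
                = w (N+m) - (q'/((N:ℝ)+m))*(w (N+m)) + (q'/((N:ℝ)+m))*L := by
              ring
            have expand2 : (q'/((N:ℝ)+m))*(L+ε/2)
                = (q'/((N:ℝ)+m))*L + E/((N:ℝ)+m) := by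
              rw [hEdef]; ring
            rw [expand] at hs
            linarith
          rw [Finset.sum_range_succ]
          have expand3 : E * ((∑ i ∈ Finset.range m, 1/((N:ℝ)+i)) + 1/((N:ℝ)+m))
              = E * (∑ i ∈ Finset.range m, 1/((N:ℝ)+i)) + E/((N:ℝ)+m) := by
            ring
          rw [expand3]
          have : w (N+(m+1)) = w (N+m+1) := by rw [← Nat.add_assoc]
          rw [this]
          linarith
      set H : ℕ → ℝ := fun n => ∑ i ∈ Finset.range n, (1/((i:ℝ)+1)) with hHdef
      obtain ⟨n, hn⟩ := eventually_atTop.1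
        (((tendsto_sum_range_one_div_nat_succ_atTop).eventually_gt_atTop
          (H N + (w N)/E)).and (eventually_ge_atTop N))
      obtain ⟨hn2, hn1⟩ := hn n le_rfl
      set m : ℕ := n - N with hmdef
      have hnm : n = N + m := by omega
      have hcomp : H n - H N ≤ ∑ i ∈ Finset.range m, 1/((N:ℝ)+i) := by
        have hsum : H n = H N + ∑ i ∈ Finset.range m, (1/(((N+i : ℕ):ℝ)+1)) := by
          rw [hHdef, hnm]
          exact Finset.sum_range_add _ N m
        rw [hsum]
        have : ∑ i ∈ Finset.range m, (1/(((N+i : ℕ):ℝ)+1))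
            ≤ ∑ i ∈ Finset.range m, 1/((N:ℝ)+i) := by
          apply Finset.sum_le_sum
          intro i _
          have hN1' : (1:ℝ) ≤ (N:ℝ) := by exact_mod_cast hN1
          have hpos : (0:ℝ) < (N:ℝ)+i := by positivity
          apply one_div_le_one_div_of_le hpos
          push_cast; linarith
        linarith
      have hS : (w N)/E < ∑ i ∈ Finset.range m, 1/((N:ℝ)+i) := by
        have : H N + (w N)/E < H n := hn2
        linarith
      have hS2 : w N < E * (∑ i ∈ Finset.range m, 1/((N:ℝ)+i)) := by
        rw [div_lt_iff₀ hE] at hS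
        linarith [hS]
      have := hdec m
      have := hw0 (N+m)
      linarith
    obtain ⟨k0, hk0N, hk0⟩ := hescape
    have hbound : ∀ k : ℕ, k0 ≤ k → w k ≤ L + ε/2 := by
      intro k hk
      induction k, hk using Nat.le_induction with
      | base => exact hk0
      | succ k hk ih => exact habs k (le_trans hk0N hk) ih
    filter_upwards [eventually_ge_atTop k0] with k hk
    have := hbound k hk
    have hLb : L ≤ d/q + ε/2 := hδL
    linarith
  -- conclude
  have hall : ∀ ε : ℝ, 0 < ε → Filter.limsup w atTop ≤ d/q + ε := fun ε hε =>
    Filter.limsup_le_of_le (Filter.isCoboundedUnder_le_of_le atTop (x := 0) hw0) (key ε hε)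
  by_contra hlt
  push_neg at hlt
  have := hall ((Filter.limsup w atTop - d/q)/2) (by linarith)
  linarith
end

section
/- Let u : ℕ → ℝ satisfy u_k ≥ 0 for all k, and suppose there are constants c, d > 0 such that u_{k+1} ≤ (1 − c/k)·u_k + d/k^{1+c} for all k ≥ 1. Then u_k = O(k^{-c} · log k) as k → ∞, i.e., there exist K > 0 and k₀ ≥ 2 such that u_k ≤ K · k^{-c} · log k for all k ≥ k₀. -/
open Real

/-- Bernoulli-type inequality for negative exponents: `(1+x)^(-c) ≥ 1 - c*x`. -/
lemma bernoulli_neg_aux {x c : ℝ} (hx : 0 ≤ x) (hc : 0 ≤ c) :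
    1 - c * x ≤ (1 + x) ^ (-c) := by
  have h1 : (0:ℝ) < 1 + x := by linarith
  rw [Real.rpow_def_of_pos h1]
  have h2 : Real.log (1 + x) ≤ x := by
    have := Real.log_le_sub_one_of_pos h1
    linarith
  have h3 : Real.log (1 + x) * -c + 1 ≤ Real.exp (Real.log (1 + x) * -c) :=
    Real.add_one_le_exp _
  have h4 : c * Real.log (1 + x) ≤ c * x := mul_le_mul_of_nonneg_left h2 hc
  nlinarith [h3, h4]

/-- `log(x+1) - log x ≥ 1/(x+1)` for `x > 0`. -/
lemma log_succ_aux {x : ℝ} (hx : 0 < x) :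
    Real.log x + 1 / (x + 1) ≤ Real.log (x + 1) := by
  have h1 : (0:ℝ) < x + 1 := by linarith
  have h2 : Real.log (x / (x + 1)) ≤ x / (x + 1) - 1 :=
    Real.log_le_sub_one_of_pos (div_pos hx h1)
  rw [Real.log_div hx.ne' h1.ne'] at h2
  have h3 : x / (x + 1) - 1 = -(1 / (x + 1)) := by field_simp; ring
  rw [h3] at h2
  linarith

/-- **Chung's lemma, case `c = p`.** If `u k ≥ 0` and
`u (k+1) ≤ (1 - c/k) * u k + d / k^(1+c)` for all `k ≥ 1`, with `c, d > 0`,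
then `u k = O(k^(-c) * log k)`. -/
theorem chung_lemma_case_eq
    (u : ℕ → ℝ) (hu : ∀ k, 0 ≤ u k)
    (c d : ℝ) (hc : 0 < c) (hd : 0 < d)
    (hrec : ∀ k : ℕ, 1 ≤ k →
      u (k + 1) ≤ (1 - c / k) * u k + d / (k : ℝ) ^ (1 + c)) :
    ∃ K : ℝ, 0 < K ∧ ∃ k₀ : ℕ, 2 ≤ k₀ ∧
      ∀ k : ℕ, k₀ ≤ k → u k ≤ K * (k : ℝ) ^ (-c) * Real.log k := by
  set k₀ : ℕ := max 2 (⌈c⌉₊ + 1) with hk₀def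
  have hk₀2 : 2 ≤ k₀ := le_max_left _ _
  have hk₀c : c ≤ (k₀ : ℝ) := by
    have h1 : (⌈c⌉₊ : ℝ) ≤ (k₀ : ℝ) := by
      exact_mod_cast le_trans (Nat.le_succ _) (le_max_right 2 (⌈c⌉₊ + 1))
    exact le_trans (Nat.le_ceil c) h1
  have hk₀pos : (0:ℝ) < (k₀ : ℝ) := by positivity
  have hlogk₀ : 0 < Real.log k₀ := by
    apply Real.log_pos
    exact_mod_cast lt_of_lt_of_le one_lt_two (by exact_mod_cast hk₀2)
  set K : ℝ := max (d * 2 ^ (1 + c)) (u k₀ * (k₀ : ℝ) ^ c / Real.log k₀) with hKdef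
  have hKd : d * 2 ^ (1 + c) ≤ K := le_max_left _ _
  have hKpos : 0 < K := lt_of_lt_of_le (by positivity) hKd
  refine ⟨K, hKpos, k₀, hk₀2, ?_⟩
  intro k hk
  induction k, hk using Nat.le_induction with
  | base =>
    have h1 : u k₀ * (k₀ : ℝ) ^ c / Real.log k₀ ≤ K := le_max_right _ _
    have h2 : u k₀ * (k₀ : ℝ) ^ c ≤ K * Real.log k₀ := by
      rwa [div_le_iff₀ hlogk₀] at h1
    have h3 : (k₀ : ℝ) ^ c * (k₀ : ℝ) ^ (-c) = 1 := by
      rw [← Real.rpow_add hk₀pos]; simp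
    calc u k₀ = u k₀ * (k₀ : ℝ) ^ c * (k₀ : ℝ) ^ (-c) := by
          rw [mul_assoc, h3, mul_one]
      _ ≤ K * Real.log k₀ * (k₀ : ℝ) ^ (-c) := by
          apply mul_le_mul_of_nonneg_right h2 (by positivity)
      _ = K * (k₀ : ℝ) ^ (-c) * Real.log k₀ := by ring
  | succ k hk ih =>
    have hx : (0:ℝ) < (k : ℝ) := by
      have : 2 ≤ k := le_trans hk₀2 hk
      exact_mod_cast lt_of_lt_of_le two_pos this
    have hxc : c ≤ (k : ℝ) := le_trans hk₀c (by exact_mod_cast hk)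
    have hx2 : (2:ℝ) ≤ (k : ℝ) := by
      exact_mod_cast le_trans hk₀2 hk
    have hlogx : 0 ≤ Real.log k := Real.log_nonneg (by linarith)
    have hfac : 0 ≤ 1 - c / k := by
      rw [sub_nonneg, div_le_one hx]; exact hxc
    have hx1 : (0:ℝ) < (k : ℝ) + 1 := by linarith
    -- key estimate 1: (1 - c/k) * k^(-c) ≤ (k+1)^(-c)
    have key1 : (1 - c / k) * (k : ℝ) ^ (-c) ≤ ((k : ℝ) + 1) ^ (-c) := by
      have hb : 1 - c * (1 / k) ≤ (1 + 1 / (k : ℝ)) ^ (-c) :=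
        bernoulli_neg_aux (by positivity) hc.le
      have heq : ((k : ℝ) + 1) ^ (-c) = (k : ℝ) ^ (-c) * (1 + 1 / (k : ℝ)) ^ (-c) := by
        rw [← Real.mul_rpow hx.le (by positivity)]
        congr 1
        field_simp
      rw [heq]
      have : 1 - c / (k : ℝ) = 1 - c * (1 / k) := by ring
      rw [this, mul_comm]
      exact mul_le_mul_of_nonneg_left hb (by positivity)
    -- key estimate 2: d / k^(1+c) ≤ K * (k+1)^(-(1+c))
    have key2 : d / (k : ℝ) ^ (1 + c) ≤ K * ((k : ℝ) + 1) ^ (-(1 + c)) := by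
      have h1 : ((k : ℝ) + 1) / (k : ℝ) ≤ 2 := by
        rw [div_le_iff₀ hx]; linarith
      have h2 : (((k : ℝ) + 1) / (k : ℝ)) ^ (1 + c) ≤ (2:ℝ) ^ (1 + c) :=
        Real.rpow_le_rpow (by positivity) h1 (by linarith)
      have h3 : (((k : ℝ) + 1) / (k : ℝ)) ^ (1 + c)
          = ((k : ℝ) + 1) ^ (1 + c) / (k : ℝ) ^ (1 + c) :=
        Real.div_rpow hx1.le hx.le (1 + c)
      have h4 : ((k : ℝ) + 1) ^ (1 + c) / (k : ℝ) ^ (1 + c) ≤ 2 ^ (1 + c) := h3 ▸ h2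
      have hkp : (0:ℝ) < (k : ℝ) ^ (1 + c) := by positivity
      have hk1p : (0:ℝ) < ((k : ℝ) + 1) ^ (1 + c) := by positivity
      have h5 : d * (((k : ℝ) + 1) ^ (1 + c) / (k : ℝ) ^ (1 + c)) ≤ d * 2 ^ (1 + c) :=
        mul_le_mul_of_nonneg_left h4 hd.le
      have h6 : d * (((k : ℝ) + 1) ^ (1 + c) / (k : ℝ) ^ (1 + c)) ≤ K := le_trans h5 hKd
      have h7 := mul_le_mul_of_nonneg_right h6 hkp.le
      have h8 : d * (((k : ℝ) + 1) ^ (1 + c) / (k : ℝ) ^ (1 + c)) * (k : ℝ) ^ (1 + c)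
          = d * ((k : ℝ) + 1) ^ (1 + c) := by field_simp
      rw [h8] at h7
      rw [Real.rpow_neg hx1.le, ← div_eq_mul_inv, div_le_div_iff₀ hkp hk1p]
      linarith
    -- key estimate 3: log(k+1) ≥ log k + 1/(k+1)
    have key3 : Real.log k + 1 / ((k : ℝ) + 1) ≤ Real.log ((k : ℝ) + 1) := log_succ_aux hx
    -- put things together
    have hrw : ((k : ℝ) + 1) ^ (-(1 + c)) = ((k : ℝ) + 1) ^ (-c) * (1 / ((k : ℝ) + 1)) := by
      rw [show -(1 + c) = -c + (-1) by ring, Real.rpow_add hx1, Real.rpow_neg_one]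
      rw [one_div]
    have hstep := hrec k (by omega)
    have hmain : (1 - c / k) * u k + d / (k : ℝ) ^ (1 + c)
        ≤ K * ((k : ℝ) + 1) ^ (-c) * Real.log ((k : ℝ) + 1) := by
      have t1 : (1 - c / k) * u k ≤ (1 - c / k) * (K * (k : ℝ) ^ (-c) * Real.log k) :=
        mul_le_mul_of_nonneg_left ih hfac
      have t2 : (1 - c / k) * (K * (k : ℝ) ^ (-c) * Real.log k)
          ≤ K * ((k : ℝ) + 1) ^ (-c) * Real.log k := by
        have := mul_le_mul_of_nonneg_right key1 (mul_nonneg hKpos.le hlogx)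
        calc (1 - c / k) * (K * (k : ℝ) ^ (-c) * Real.log k)
            = (1 - c / k) * (k : ℝ) ^ (-c) * (K * Real.log k) := by ring
          _ ≤ ((k : ℝ) + 1) ^ (-c) * (K * Real.log k) := this
          _ = K * ((k : ℝ) + 1) ^ (-c) * Real.log k := by ring
      have t3 : K * ((k : ℝ) + 1) ^ (-c) * Real.log k + K * ((k : ℝ) + 1) ^ (-(1 + c))
          ≤ K * ((k : ℝ) + 1) ^ (-c) * Real.log ((k : ℝ) + 1) := by
        rw [hrw]
        have := mul_le_mul_of_nonneg_left key3
          (mul_nonneg hKpos.le (Real.rpow_nonneg hx1.le (-c)))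
        calc K * ((k : ℝ) + 1) ^ (-c) * Real.log k
              + K * (((k : ℝ) + 1) ^ (-c) * (1 / ((k : ℝ) + 1)))
            = K * ((k : ℝ) + 1) ^ (-c) * (Real.log k + 1 / ((k : ℝ) + 1)) := by ring
          _ ≤ K * ((k : ℝ) + 1) ^ (-c) * Real.log ((k : ℝ) + 1) := this
      linarith
    have hcast : ((k : ℝ) + 1) = ((k + 1 : ℕ) : ℝ) := by push_cast; ring
    calc u (k + 1) ≤ (1 - c / k) * u k + d / (k : ℝ) ^ (1 + c) := hstep
      _ ≤ K * ((k : ℝ) + 1) ^ (-c) * Real.log ((k : ℝ) + 1) := hmain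
      _ = K * ((k + 1 : ℕ) : ℝ) ^ (-c) * Real.log ((k + 1 : ℕ) : ℝ) := by rw [hcast]
end

section
/- Let u : ℕ → ℝ satisfy u_k ≥ 0 for all k, and suppose there are constants c, d, p > 0 with c < p such that u_{k+1} ≤ (1 − c/k)·u_k + d/k^{1+p} for all k ≥ 1. Then u_k = O(k^{-c}) as k → ∞, i.e., there exist K > 0 and k₀ ≥ 1 such that u_k ≤ K · k^{-c} for all k ≥ k₀. -/
/-- For `t ≤ 0`, `exp t ≤ 1 + t + t²`. -/
private lemma exp_quad_bound (t : ℝ) (ht : t ≤ 0) : Real.exp t ≤ 1 + t + t ^ 2 := by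
  have h1 := Real.add_one_le_exp (-t)
  have h2 : Real.exp t * Real.exp (-t) = 1 := by
    rw [← Real.exp_add]; simp
  have h3 : (0:ℝ) < Real.exp t := Real.exp_pos t
  nlinarith [Real.exp_pos (-t), sq_nonneg t, mul_pos h3 (Real.exp_pos (-t))]

/-- Lower bound on `log (1+y)` for `y ≥ 0`. -/
private lemma log_one_add_ge (y : ℝ) (hy : 0 ≤ y) : y - y ^ 2 ≤ Real.log (1 + y) := by
  have h1y : (0:ℝ) < 1 + y := by linarith
  have h := Real.log_le_sub_one_of_pos (inv_pos.mpr h1y)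
  rw [Real.log_inv] at h
  have hinv : (1 + y) * (1 + y)⁻¹ = 1 := mul_inv_cancel₀ (ne_of_gt h1y)
  nlinarith [inv_nonneg.mpr h1y.le]

/-- Upper bound: `log (1+y) ≤ y` for `y ≥ 0`. -/
private lemma log_one_add_le (y : ℝ) (hy : 0 ≤ y) : Real.log (1 + y) ≤ y := by
  have := Real.log_le_sub_one_of_pos (show (0:ℝ) < 1 + y by linarith)
  linarith

/-- Bernoulli-type bound: `(1+y)^(-e) ≥ 1 - e*y` for `y ≥ 0`, `e ≥ 0`. -/
private lemma rpow_neg_ge (y e : ℝ) (hy : 0 ≤ y) (he : 0 ≤ e) :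
    1 - e * y ≤ (1 + y) ^ (-e) := by
  have h1y : (0:ℝ) < 1 + y := by linarith
  rw [Real.rpow_def_of_pos h1y]
  have hL : Real.log (1 + y) ≤ y := log_one_add_le y hy
  have h := Real.add_one_le_exp (Real.log (1 + y) * (-e))
  nlinarith

/-- Upper bound: `(1+y)^(-e) ≤ 1 - e*(y - y²) + e²*y²` for `y ≥ 0`, `e ≥ 0`. -/
private lemma rpow_neg_le (y e : ℝ) (hy : 0 ≤ y) (he : 0 ≤ e) :
    (1 + y) ^ (-e) ≤ 1 - e * (y - y ^ 2) + e ^ 2 * y ^ 2 := by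
  have h1y : (0:ℝ) < 1 + y := by linarith
  rw [Real.rpow_def_of_pos h1y]
  have hL0 : 0 ≤ Real.log (1 + y) := by
    have : Real.log 1 ≤ Real.log (1 + y) := Real.log_le_log (by norm_num) (by linarith)
    simpa using this
  have hL1 : Real.log (1 + y) ≤ y := log_one_add_le y hy
  have hL2 : y - y ^ 2 ≤ Real.log (1 + y) := log_one_add_ge y hy
  have ht : Real.log (1 + y) * (-e) ≤ 0 := by
    have := mul_nonneg hL0 he; nlinarith
  have h := exp_quad_bound _ ht
  have hsq : (Real.log (1 + y)) ^ 2 ≤ y ^ 2 := by nlinarith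
  have h2 : e * (y - y ^ 2) ≤ e * Real.log (1 + y) := mul_le_mul_of_nonneg_left hL2 he
  have h3 : e ^ 2 * (Real.log (1 + y)) ^ 2 ≤ e ^ 2 * y ^ 2 :=
    mul_le_mul_of_nonneg_left hsq (sq_nonneg e)
  nlinarith [h, h2, h3]

/-- **Chung's lemma, case `c < p`.** If `u k ≥ 0` and
`u (k+1) ≤ (1 - c/k) * u k + d / k^(1+p)` for all `k ≥ 1`, with `0 < c < p` and `d > 0`,
then `u k = O(k^(-c))`. -/
theorem chung_lemma_case_lt
    (u : ℕ → ℝ) (hu : ∀ k, 0 ≤ u k)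
    (c d p : ℝ) (hc : 0 < c) (hd : 0 < d) (hp : 0 < p) (hcp : c < p)
    (hrec : ∀ k : ℕ, 1 ≤ k →
      u (k + 1) ≤ (1 - c / k) * u k + d / (k : ℝ) ^ (1 + p)) :
    ∃ K : ℝ, 0 < K ∧ ∃ k₀ : ℕ, 1 ≤ k₀ ∧
      ∀ k : ℕ, k₀ ≤ k → u k ≤ K * (k : ℝ) ^ (-c) := by
  have hpc : 0 < p - c := by linarith
  obtain ⟨M, hMdef⟩ : ∃ M : ℝ, M = 2 * d / (p - c) := ⟨_, rfl⟩
  have hM : 0 < M := by rw [hMdef]; positivity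
  obtain ⟨B, hBdef⟩ : ∃ B : ℝ, B = max c (2 * (p + p ^ 2) / (p - c)) := ⟨_, rfl⟩
  obtain ⟨k₀, hk₀def⟩ : ∃ k₀ : ℕ, k₀ = max 1 ⌈B⌉₊ := ⟨_, rfl⟩
  have hk₀1 : 1 ≤ k₀ := hk₀def ▸ le_max_left _ _
  have hceil : B ≤ (k₀ : ℝ) := by
    calc B ≤ (⌈B⌉₊ : ℝ) := Nat.le_ceil B
    _ ≤ (k₀ : ℝ) := by rw [hk₀def]; exact_mod_cast Nat.cast_le.mpr (le_max_right 1 ⌈B⌉₊)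
  have hk₀c : c ≤ (k₀ : ℝ) := le_trans (hBdef ▸ le_max_left _ _) hceil
  have hk₀x : 2 * (p + p ^ 2) / (p - c) ≤ (k₀ : ℝ) := le_trans (hBdef ▸ le_max_right _ _) hceil
  obtain ⟨K, hKdef⟩ : ∃ K : ℝ, K = u k₀ * (k₀ : ℝ) ^ c + M := ⟨_, rfl⟩
  have hk₀pos : (0:ℝ) < (k₀ : ℝ) := by exact_mod_cast hk₀1
  have hK : 0 < K := by
    have := mul_nonneg (hu k₀) (Real.rpow_pos_of_pos hk₀pos c).le
    rw [hKdef]; linarith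
  refine ⟨K, hK, k₀, hk₀1, ?_⟩
  -- Key invariant
  have key : ∀ k : ℕ, k₀ ≤ k → u k ≤ K * (k : ℝ) ^ (-c) - M * (k : ℝ) ^ (-p) := by
    intro k hk
    induction k, hk using Nat.le_induction with
    | base =>
      have hcancel : (k₀ : ℝ) ^ c * (k₀ : ℝ) ^ (-c) = 1 := by
        rw [← Real.rpow_add hk₀pos]
        norm_num
      have hle : (k₀ : ℝ) ^ (-p) ≤ (k₀ : ℝ) ^ (-c) :=
        Real.rpow_le_rpow_of_exponent_le (by exact_mod_cast hk₀1) (by linarith)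
      have hposc : 0 < (k₀ : ℝ) ^ (-c) := Real.rpow_pos_of_pos hk₀pos _
      have h1 : K * (k₀ : ℝ) ^ (-c) = u k₀ * ((k₀ : ℝ) ^ c * (k₀ : ℝ) ^ (-c))
          + M * (k₀ : ℝ) ^ (-c) := by rw [hKdef]; ring
      rw [h1, hcancel]
      nlinarith
    | succ k hk ih =>
      have hk1 : 1 ≤ k := le_trans hk₀1 hk
      obtain ⟨x, hxdef⟩ : ∃ x : ℝ, x = (k : ℝ) := ⟨_, rfl⟩
      have hxk : (k₀ : ℝ) ≤ x := by rw [hxdef]; exact_mod_cast hk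
      have hrec' := hrec k hk1
      rw [← hxdef] at hrec' ih
      have hx0 : 0 < x := lt_of_lt_of_le hk₀pos hxk
      have hxc : c ≤ x := le_trans hk₀c hxk
      have hxB : 2 * (p + p ^ 2) / (p - c) ≤ x := le_trans hk₀x hxk
      obtain ⟨y, hydef⟩ : ∃ y : ℝ, y = 1 / x := ⟨_, rfl⟩
      have hy0 : 0 < y := by rw [hydef]; positivity
      have hxy : x * y = 1 := by rw [hydef]; field_simp
      have hsplit : x + 1 = x * (1 + y) := by rw [hydef]; field_simp
      have hmul : ∀ e : ℝ, (x + 1) ^ (-e) = x ^ (-e) * (1 + y) ^ (-e) := by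
        intro e
        rw [hsplit, Real.mul_rpow hx0.le (by linarith)]
      have hxpowpos : ∀ e : ℝ, 0 < x ^ e := fun e => Real.rpow_pos_of_pos hx0 e
      have hcx : c / x = c * y := by rw [hydef]; ring
      -- (A) : (1 - c/x) * x^(-c) ≤ (x+1)^(-c)
      have hA : (1 - c / x) * x ^ (-c) ≤ (x + 1) ^ (-c) := by
        rw [hmul c, hcx]
        have hb := rpow_neg_ge y c hy0.le hc.le
        have := mul_le_mul_of_nonneg_right hb (hxpowpos (-c)).le
        linarith [this]
      -- (B) : d / x^(1+p) ≤ M * ((1 - c/x)*x^(-p) - (x+1)^(-p))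
      have hB : d / x ^ (1 + p) ≤ M * ((1 - c / x) * x ^ (-p) - (x + 1) ^ (-p)) := by
        have hinv : d / x ^ (1 + p) = d * y * x ^ (-p) := by
          rw [Real.rpow_add hx0, Real.rpow_one, Real.rpow_neg hx0.le p, hydef,
            div_eq_mul_inv, mul_inv]
          ring
        rw [hmul p, hinv]
        have hup : (1 + y) ^ (-p) ≤ 1 - p * (y - y ^ 2) + p ^ 2 * y ^ 2 :=
          rpow_neg_le y p hy0.le hp.le
        have hysmall : (p + p ^ 2) * y ≤ (p - c) / 2 := by
          have hx2 : 2 * (p + p ^ 2) ≤ (p - c) * x := by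
            rw [div_le_iff₀ hpc] at hxB; linarith
          have hxy' : (p - c) * (x * y) = p - c := by rw [hxy]; ring
          linarith [mul_le_mul_of_nonneg_right hx2 hy0.le, hxy']
        have h5 : (p + p ^ 2) * y * y ≤ (p - c) / 2 * y :=
          mul_le_mul_of_nonneg_right hysmall hy0.le
        have h7 : (p - c) / 2 * y ≤ (1 - c * y) - (1 + y) ^ (-p) := by linarith [hup, h5]
        have h8 := mul_le_mul_of_nonneg_left h7 hM.le
        have h9 : M * ((p - c) / 2 * y) = d * y := by
          rw [hMdef]; field_simp
        have h10 : d * y ≤ M * ((1 - c * y) - (1 + y) ^ (-p)) := by linarith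
        calc d * y * x ^ (-p)
            ≤ M * ((1 - c * y) - (1 + y) ^ (-p)) * x ^ (-p) :=
              mul_le_mul_of_nonneg_right h10 (hxpowpos (-p)).le
          _ = M * ((1 - c / x) * x ^ (-p) - x ^ (-p) * (1 + y) ^ (-p)) := by
              rw [hcx]; ring
      -- Put it together
      have h1mc : 0 ≤ 1 - c / x := by
        rw [sub_nonneg, div_le_one hx0]; exact hxc
      have hu' : (1 - c / x) * u k ≤ (1 - c / x) * (K * x ^ (-c) - M * x ^ (-p)) :=
        mul_le_mul_of_nonneg_left ih h1mc
      have hcast : ((k + 1 : ℕ) : ℝ) = x + 1 := by rw [hxdef]; push_cast; ring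
      rw [hcast]
      have hKA : K * ((1 - c / x) * x ^ (-c)) ≤ K * (x + 1) ^ (-c) :=
        mul_le_mul_of_nonneg_left hA hK.le
      calc u (k + 1) ≤ (1 - c / x) * u k + d / x ^ (1 + p) := hrec'
        _ ≤ (1 - c / x) * (K * x ^ (-c) - M * x ^ (-p)) + d / x ^ (1 + p) := by linarith
        _ ≤ K * (x + 1) ^ (-c) - M * (x + 1) ^ (-p) := by linarith [hKA, hB]
  intro k hk
  have hkey := key k hk
  have hkpos : (0:ℝ) < (k : ℝ) := lt_of_lt_of_le hk₀pos (by exact_mod_cast hk)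
  have hnn : 0 ≤ M * (k : ℝ) ^ (-p) := by positivity
  linarith
end

section
/- Let n ∈ ℕ, let f : ℝⁿ → ℝ be continuous with f(x) ≥ 0 for all x, and suppose there exist C₀ > 0 and α < 2 such that f(x) ≤ C₀·exp(‖x‖^α) for all x ∈ ℝⁿ. Let A ⊆ ℝⁿ be compact and let σ₀ > 0. Then there exists C > 0 such that for all μ ∈ A, all θ ∈ [0, 1], and all σ ∈ (0, σ₀], ∫ f(μ + θ·(x − μ)) dγ_{μ,σ}(x) ≤ C, where γ_{μ,σ} is the product Gaussian measure on ℝⁿ whose k-th coordinate has mean μ_k and variance σ². -/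
open MeasureTheory ProbabilityTheory

lemma int_one_dim : Integrable (fun x : ℝ => Real.exp (x^2/4)) (gaussianReal 0 1) := by
  rw [gaussianReal_of_var_ne_zero 0 one_ne_zero,
    integrable_withDensity_iff (measurable_gaussianPDF 0 1)
      (Filter.Eventually.of_forall fun x => ENNReal.ofReal_lt_top)]
  have : (fun x : ℝ => Real.exp (x^2/4) * (gaussianPDF 0 1 x).toReal)
      = fun x : ℝ => (Real.sqrt (2 * Real.pi * ((1:NNReal):ℝ)))⁻¹ *
        Real.exp (-(4:ℝ)⁻¹ * x ^ 2) := by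
    ext x
    rw [gaussianPDF, ENNReal.toReal_ofReal (gaussianPDFReal_nonneg _ _ _), gaussianPDFReal]
    rw [mul_comm, mul_assoc, ← Real.exp_add]
    congr 1
    push_cast
    ring_nf
  rw [this]
  exact (integrable_exp_neg_mul_sq (by norm_num)).const_mul _

lemma int_prod (n : ℕ) :
    Integrable (fun z : Fin n → ℝ => ∏ k, Real.exp ((z k)^2/4))
      (Measure.pi fun _ => gaussianReal 0 1) := by
  letI : MeasureSpace ℝ := ⟨gaussianReal 0 1⟩
  haveI : SigmaFinite (volume : Measure ℝ) :=
    (inferInstance : SigmaFinite (gaussianReal 0 1))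
  have h : (Measure.pi fun _ : Fin n => gaussianReal 0 1) = volume := rfl
  rw [h]
  exact Integrable.fintype_prod (f := fun _ x => Real.exp (x^2/4)) (fun _ => int_one_dim)

lemma map_pi_gauss (n : ℕ) (μ : Fin n → ℝ) (σ : ℝ) :
    (Measure.pi fun _ : Fin n => gaussianReal 0 1).map (fun z k => μ k + σ * z k)
      = Measure.pi fun k => gaussianReal (μ k) (Real.toNNReal (σ ^ 2)) := by
  have h1 : ∀ k, MeasurePreserving (fun x : ℝ => μ k + σ * x)
      (gaussianReal 0 1) (gaussianReal (μ k) (Real.toNNReal (σ ^ 2))) := by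
    intro k
    constructor
    · exact (measurable_const_mul σ).const_add (μ k)
    · have hc : (fun x : ℝ => μ k + σ * x) = (fun y => μ k + y) ∘ (fun x => σ * x) := rfl
      rw [hc, ← Measure.map_map (measurable_const_add _) (measurable_const_mul _),
        gaussianReal_map_const_mul, gaussianReal_map_const_add]
      have hm : σ * 0 + μ k = μ k := by ring
      have hv : (⟨σ^2, sq_nonneg σ⟩ : NNReal) * 1 = Real.toNNReal (σ ^ 2) := by
        refine NNReal.coe_injective ?_
        simp [Real.coe_toNNReal _ (sq_nonneg σ)]
        rfl
      rw [hm]; congr 1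
  exact (MeasureTheory.measurePreserving_pi _ _ h1).map_eq

lemma exists_rpow_quad_bound (c σ₀ β : ℝ) (hc : 0 ≤ c) (hσ₀ : 0 < σ₀)
    (hβ0 : 0 ≤ β) (hβ : β < 2) :
    ∃ K : ℝ, 0 ≤ K ∧ ∀ t : ℝ, 0 ≤ t → (c + σ₀ * t) ^ β ≤ K + t ^ 2 / 4 := by
  have h2β : (0:ℝ) < 2 - β := by linarith
  have hev : ∀ᶠ t in Filter.atTop, 4 * (c + σ₀) ^ β ≤ t ^ (2 - β) :=
    (tendsto_rpow_atTop h2β).eventually_ge_atTop _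
  obtain ⟨T, hT⟩ := Filter.eventually_atTop.mp hev
  set T₀ : ℝ := max T 1 with hT₀def
  have hT₀1 : (1:ℝ) ≤ T₀ := le_max_right _ _
  have hT₀0 : (0:ℝ) ≤ T₀ := zero_le_one.trans hT₀1
  refine ⟨(c + σ₀ * T₀) ^ β, Real.rpow_nonneg (by positivity) _, fun t ht => ?_⟩
  by_cases hts : t ≤ T₀
  · have h1 : (c + σ₀ * t) ^ β ≤ (c + σ₀ * T₀) ^ β :=
      Real.rpow_le_rpow (by positivity) (by nlinarith) hβ0
    nlinarith [sq_nonneg t]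
  · push_neg at hts
    have ht1 : (1:ℝ) ≤ t := hT₀1.trans hts.le
    have ht0 : (0:ℝ) < t := by linarith
    have hTt : T ≤ t := (le_max_left T 1).trans hts.le
    have h4 : 4 * (c + σ₀) ^ β ≤ t ^ (2 - β) := hT t hTt
    have h1 : (c + σ₀ * t) ^ β ≤ ((c + σ₀) * t) ^ β :=
      Real.rpow_le_rpow (by positivity) (by nlinarith) hβ0
    have h2 : ((c + σ₀) * t) ^ β = (c + σ₀) ^ β * t ^ β :=
      Real.mul_rpow (by positivity) ht0.le
    have h3 : (c + σ₀) ^ β * t ^ β ≤ (t ^ (2 - β) / 4) * t ^ β := by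
      apply mul_le_mul_of_nonneg_right _ (Real.rpow_nonneg ht0.le _)
      linarith
    have h5 : (t ^ (2 - β) : ℝ) * t ^ β = t ^ 2 := by
      rw [← Real.rpow_add ht0]
      norm_num
    have hK0 : (0:ℝ) ≤ (c + σ₀ * T₀) ^ β := Real.rpow_nonneg (by positivity) _
    calc (c + σ₀ * t) ^ β ≤ (c + σ₀) ^ β * t ^ β := by rw [← h2]; exact h1
      _ ≤ (t ^ (2 - β) / 4) * t ^ β := h3
      _ = t ^ 2 / 4 := by rw [div_mul_eq_mul_div, h5]
      _ ≤ (c + σ₀ * T₀) ^ β + t ^ 2 / 4 := by linarith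

/-- The product Gaussian measure on `ℝⁿ` (as `EuclideanSpace ℝ (Fin n)`) whose `k`-th
coordinate is a one-dimensional Gaussian with mean `μ k` and variance `σ²`. -/
noncomputable def gaussPi (n : ℕ) (μ : EuclideanSpace ℝ (Fin n)) (σ : ℝ) :
    Measure (EuclideanSpace ℝ (Fin n)) :=
  (Measure.pi fun k => gaussianReal (μ k) (Real.toNNReal (σ ^ 2))).map
    (MeasurableEquiv.toLp 2 (Fin n → ℝ))

/-- Auxiliary lemma of the appendix: for a nonnegative continuous `f` of sub-Gaussian
growth, a compact set `A` and `σ₀ > 0`, the expectations of `f` at the intermediate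
points `μ + θ (ξ - μ)`, `ξ ~ γ_{μ,σ}`, are uniformly bounded over `μ ∈ A`, `θ ∈ [0,1]`
and `σ ∈ (0, σ₀]`. -/
theorem uniform_bound_intermediate_points
    (n : ℕ) (f : EuclideanSpace ℝ (Fin n) → ℝ) (hfc : Continuous f)
    (hfnonneg : ∀ x, 0 ≤ f x)
    (C₀ α : ℝ) (hC₀ : 0 < C₀) (hα : α < 2)
    (hfb : ∀ x, f x ≤ C₀ * Real.exp (‖x‖ ^ α))
    (A : Set (EuclideanSpace ℝ (Fin n))) (hA : IsCompact A)
    (σ₀ : ℝ) (hσ₀ : 0 < σ₀) :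
    ∃ C : ℝ, 0 < C ∧
      ∀ μ ∈ A, ∀ θ ∈ Set.Icc (0 : ℝ) 1, ∀ σ : ℝ, 0 < σ → σ ≤ σ₀ →
        ∫ x, f (μ + θ • (x - μ)) ∂(gaussPi n μ σ) ≤ C := by
  classical
  obtain ⟨r, hr⟩ := (Metric.isBounded_iff_subset_closedBall 0).mp hA.isBounded
  set R : ℝ := max r 0 with hRdef
  have hR0 : 0 ≤ R := le_max_right r 0
  obtain ⟨M0, hM0⟩ :=
    (isCompact_closedBall (0 : EuclideanSpace ℝ (Fin n)) 1).exists_bound_of_continuousOn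
      hfc.continuousOn
  set M : ℝ := max M0 0 with hMdef
  have hMnn : 0 ≤ M := le_max_right _ _
  set β : ℝ := max α 1 with hβdef
  have hβ0 : (0:ℝ) ≤ β := zero_le_one.trans (le_max_right α 1)
  have hβ2 : β < 2 := max_lt hα one_lt_two
  have hαβ : α ≤ β := le_max_left _ _
  have hfB : ∀ y : EuclideanSpace ℝ (Fin n), f y ≤ M + C₀ * Real.exp ((1 + ‖y‖) ^ β) := by
    intro y
    have hexp : (0:ℝ) < C₀ * Real.exp ((1 + ‖y‖) ^ β) := by positivity
    by_cases h1 : ‖y‖ ≤ 1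
    · have hy : f y ≤ M0 := by
        have h := hM0 y (by simpa [Metric.mem_closedBall, dist_zero_right] using h1)
        calc f y ≤ |f y| := le_abs_self _
          _ ≤ M0 := h
      have : f y ≤ M := hy.trans (le_max_left _ _)
      linarith
    · push_neg at h1
      have h2 : ‖y‖ ^ α ≤ (1 + ‖y‖) ^ β :=
        (Real.rpow_le_rpow_of_exponent_le h1.le hαβ).trans
          (Real.rpow_le_rpow (norm_nonneg y) (by linarith) hβ0)
      have h3 : C₀ * Real.exp (‖y‖ ^ α) ≤ C₀ * Real.exp ((1 + ‖y‖) ^ β) :=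
        mul_le_mul_of_nonneg_left (Real.exp_le_exp.mpr h2) hC₀.le
      have := (hfb y).trans h3
      linarith
  obtain ⟨K, hK0, hK⟩ := exists_rpow_quad_bound (1 + R) σ₀ β (by linarith) hσ₀ hβ0 hβ2
  set P₀ : Measure (Fin n → ℝ) := Measure.pi fun _ => gaussianReal 0 1 with hP₀def
  haveI : IsProbabilityMeasure P₀ := by rw [hP₀def]; infer_instance
  set J : ℝ := ∫ z, ∏ k, Real.exp ((z k)^2/4) ∂P₀ with hJdef
  have hJ0 : 0 ≤ J :=
    integral_nonneg fun z => Finset.prod_nonneg fun k _ => (Real.exp_pos _).le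
  refine ⟨1 + M + C₀ * Real.exp K * J, by positivity, ?_⟩
  intro μ hμ θ hθ σ hσ hσσ₀
  have hμR : ‖μ‖ ≤ R := by
    have h := hr hμ
    rw [Metric.mem_closedBall, dist_zero_right] at h
    exact h.trans (le_max_left r 0)
  rw [gaussPi, MeasureTheory.integral_map_equiv, ← map_pi_gauss n (fun k => μ k) σ]
  set e := MeasurableEquiv.toLp 2 (Fin n → ℝ) with hedef
  have hΦm : Measurable fun z : Fin n → ℝ => fun k => μ k + σ * z k :=
    measurable_pi_lambda _ fun k => ((measurable_pi_apply k : Measurable fun z : Fin n → ℝ => z k).const_mul σ).const_add (μ k)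
  have hFcont : Continuous fun z : Fin n → ℝ => f (μ + θ • (e z - μ)) := by
    apply hfc.comp
    exact continuous_const.add
      ((((PiLp.continuous_toLp 2 fun _ : Fin n => ℝ)).sub continuous_const).const_smul θ)
  rw [integral_map hΦm.aemeasurable hFcont.aestronglyMeasurable]
  have hle : ∀ w : Fin n → ℝ,
      f (μ + θ • (e (fun k => μ k + σ * w k) - μ))
        ≤ M + C₀ * Real.exp K * ∏ k, Real.exp ((w k)^2/4) := by
    intro w
    have hcoord : e (fun k => μ k + σ * w k) - μ = σ • e w := by
      ext k
      show (μ k + σ * w k) - μ k = σ * w k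
      ring
    rw [hcoord]
    set t : ℝ := ‖e w‖ with htdef
    have ht0 : 0 ≤ t := norm_nonneg _
    have hnorm : ‖μ + θ • σ • e w‖ ≤ R + σ₀ * t := by
      have h1 : ‖μ + θ • σ • e w‖ ≤ ‖μ‖ + ‖θ • σ • e w‖ := norm_add_le _ _
      have h2 : ‖θ • σ • e w‖ = |θ| * (|σ| * t) := by
        rw [norm_smul, norm_smul, Real.norm_eq_abs, Real.norm_eq_abs]
      have hθ0 := hθ.1
      have hθ1 := hθ.2
      have h3 : |θ| * (|σ| * t) ≤ σ₀ * t := by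
        rw [abs_of_nonneg hθ0, abs_of_nonneg hσ.le]
        nlinarith [mul_nonneg hσ.le ht0, mul_le_mul_of_nonneg_right hσσ₀ ht0]
      calc ‖μ + θ • σ • e w‖ ≤ ‖μ‖ + |θ| * (|σ| * t) := by rw [← h2]; exact h1
        _ ≤ R + σ₀ * t := add_le_add hμR h3
    have harg : (1 + ‖μ + θ • σ • e w‖) ^ β ≤ K + t ^ 2 / 4 := by
      have h1 : (1 + ‖μ + θ • σ • e w‖ : ℝ) ^ β ≤ ((1 + R) + σ₀ * t) ^ β :=
        Real.rpow_le_rpow (by positivity) (by linarith) hβ0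
      exact h1.trans (hK t ht0)
    have ht2 : t ^ 2 = ∑ k, (w k) ^ 2 := by
      rw [htdef, EuclideanSpace.norm_eq, Real.sq_sqrt (by positivity)]
      congr 1
      funext k
      rw [Real.norm_eq_abs, sq_abs]
      rfl
    have hprod : Real.exp (K + t ^ 2 / 4) = Real.exp K * ∏ k, Real.exp ((w k)^2/4) := by
      rw [Real.exp_add]
      congr 1
      rw [ht2, Finset.sum_div, Real.exp_sum]
    calc f (μ + θ • σ • e w) ≤ M + C₀ * Real.exp ((1 + ‖μ + θ • σ • e w‖) ^ β) :=
        hfB _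
      _ ≤ M + C₀ * Real.exp (K + t ^ 2 / 4) := by
        have := Real.exp_le_exp.mpr harg
        nlinarith
      _ = M + C₀ * Real.exp K * ∏ k, Real.exp ((w k)^2/4) := by
        rw [hprod]; ring
  have hHint : Integrable
      (fun w : Fin n → ℝ => M + C₀ * Real.exp K * ∏ k, Real.exp ((w k)^2/4)) P₀ :=
    (integrable_const M).add ((int_prod n).const_mul (C₀ * Real.exp K))
  calc ∫ w, f (μ + θ • (e (fun k => μ k + σ * w k) - μ)) ∂P₀
      ≤ ∫ w, (M + C₀ * Real.exp K * ∏ k, Real.exp ((w k)^2/4)) ∂P₀ :=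
        integral_mono_of_nonneg (Filter.Eventually.of_forall fun w => hfnonneg _) hHint
          (Filter.Eventually.of_forall hle)
    _ = M + C₀ * Real.exp K * J := by
        rw [integral_add (integrable_const M) ((int_prod n).const_mul (C₀ * Real.exp K)),
          integral_const, integral_const_mul]
        simp [hJdef, hP₀def]
    _ ≤ 1 + M + C₀ * Real.exp K * J := by linarith
end
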